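/- The inverse translations are left inverses of the forward translations up to β-conversion: for any Γ-term M of the FPTS λS, φ(|M|_Γ) ≡_β M, and for any Γ-type A, ψ(‖A‖_Γ) ≡_β A. -/

import Mathlib

/-- Terms of a generic λ-calculus with sorts `S` and constants `C` (de Bruijn indices). -/
inductive Tm (S : Type) (C : Type) : Type
  | sort : S → Tm S C
  | const : C → Tm S C
  | var : Nat → Tm S C
  | app : Tm S C → Tm S C → Tm S C
  | lam : Tm S C → Tm S C → Tm S C
  | pi : Tm S C → Tm S C → Tm S C

namespace Tm
variable {S C : Type}

/-- Lifting of de Bruijn indices ≥ k by d. -/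
def lift (d k : Nat) : Tm S C → Tm S C
  | sort s => sort s
  | const c => const c
  | var i => if i < k then var i else var (i + d)
  | app m n => app (m.lift d k) (n.lift d k)
  | lam a m => lam (a.lift d k) (m.lift d (k+1))
  | pi a b => pi (a.lift d k) (b.lift d (k+1))

/-- Substitution of variable k by N. -/
def subst (k : Nat) (N : Tm S C) : Tm S C → Tm S C
  | sort s => sort s
  | const c => const c
  | var i => if i < k then var i else if i = k then N.lift k 0 else var (i-1)
  | app m n => app (subst k N m) (subst k N n)
  | lam a m => lam (subst k N a) (subst (k+1) N m)
  | pi a b => pi (subst k N a) (subst (k+1) N b)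

/-- Lifting a simultaneous substitution under a binder. -/
def upσ (σ : Nat → Tm S C) : Nat → Tm S C
  | 0 => var 0
  | i+1 => (σ i).lift 1 0

/-- Simultaneous substitution. -/
def msubst (σ : Nat → Tm S C) : Tm S C → Tm S C
  | sort s => sort s
  | const c => const c
  | var i => σ i
  | app m n => app (m.msubst σ) (n.msubst σ)
  | lam a m => lam (a.msubst σ) (m.msubst (upσ σ))
  | pi a b => pi (a.msubst σ) (b.msubst (upσ σ))

end Tm

/-- A rewrite rule [Δ] l ↝ r. -/
abbrev Rule (S C : Type) := List (Tm S C) × Tm S C × Tm S C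

/-- One-step βR-reduction (contextual closure of β together with rules of R). -/
inductive Step {S C : Type} (R : Rule S C → Prop) : Tm S C → Tm S C → Prop
  | beta {A M N} : Step R (.app (.lam A M) N) (Tm.subst 0 N M)
  | rew {Δ l r} (σ : Nat → Tm S C) : R (Δ, l, r) → Step R (l.msubst σ) (r.msubst σ)
  | appL {M M' N} : Step R M M' → Step R (.app M N) (.app M' N)
  | appR {M N N'} : Step R N N' → Step R (.app M N) (.app M N')
  | lamA {A A' M} : Step R A A' → Step R (.lam A M) (.lam A' M)
  | lamM {A M M'} : Step R M M' → Step R (.lam A M) (.lam A M')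
  | piA {A A' B} : Step R A A' → Step R (.pi A B) (.pi A' B)
  | piB {A B B'} : Step R B B' → Step R (.pi A B) (.pi A B')

/-- The empty rewrite system: pure β-reduction. -/
def NoRules {S C : Type} : Rule S C → Prop := fun _ => False

/-- Multistep reduction. -/
abbrev Red {S C : Type} (R : Rule S C → Prop) : Tm S C → Tm S C → Prop :=
  Relation.ReflTransGen (Step R)

/-- Conversion: smallest congruence containing the reduction. -/
abbrev Conv {S C : Type} (R : Rule S C → Prop) : Tm S C → Tm S C → Prop :=
  Relation.EqvGen (Step R)

/-- Pure β-reduction and conversion. -/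
abbrev BetaRed {S C : Type} : Tm S C → Tm S C → Prop := Red NoRules
abbrev BetaConv {S C : Type} : Tm S C → Tm S C → Prop := Conv NoRules

/-- Confluence of a relation. -/
def Confluent {X : Type} (r : X → X → Prop) : Prop :=
  ∀ a b c, Relation.ReflTransGen r a b → Relation.ReflTransGen r a c →
    ∃ d, Relation.ReflTransGen r b d ∧ Relation.ReflTransGen r c d

/-- A PTS specification: a set of sorts, axioms and rules. -/
structure Spec (S : Type) where
  sorts : Set S
  ax : S → S → Prop
  ru : S → S → S → Prop

/-- Functional specifications. -/
def Spec.Functional {S : Type} (sp : Spec S) : Prop :=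
  (∀ s₁ s₂ s₂', sp.ax s₁ s₂ → sp.ax s₁ s₂' → s₂ = s₂') ∧
  (∀ s₁ s₂ s₃ s₃', sp.ru s₁ s₂ s₃ → sp.ru s₁ s₂ s₃' → s₃ = s₃')

/-- Top-sorts: sorts with no axiom. -/
def Spec.TopSort {S : Type} (sp : Spec S) (s : S) : Prop :=
  s ∈ sp.sorts ∧ ¬ ∃ s', sp.ax s s'

mutual
/-- Well-formed contexts (generic typing, parametrized by a spec, a constant
signature with a validity predicate, and a rewrite system used in conversion). -/
inductive Wf {S C : Type} (sp : Spec S) (sig : C → Tm S C) (valid : C → Prop)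
    (R : Rule S C → Prop) : List (Tm S C) → Prop
  | nil : Wf sp sig valid R []
  | cons {Γ A s} : Typing sp sig valid R Γ A (.sort s) → Wf sp sig valid R (A :: Γ)

/-- Typing judgment Γ ⊢ M : A (conversion modulo βR). -/
inductive Typing {S C : Type} (sp : Spec S) (sig : C → Tm S C) (valid : C → Prop)
    (R : Rule S C → Prop) : List (Tm S C) → Tm S C → Tm S C → Prop
  | var {Γ i A} : Wf sp sig valid R Γ → Γ[i]? = some A →
      Typing sp sig valid R Γ (.var i) (A.lift (i+1) 0)
  | const {Γ c} : Wf sp sig valid R Γ → valid c →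
      Typing sp sig valid R Γ (.const c) (sig c)
  | sort {Γ s₁ s₂} : Wf sp sig valid R Γ → sp.ax s₁ s₂ →
      Typing sp sig valid R Γ (.sort s₁) (.sort s₂)
  | pi {Γ A B s₁ s₂ s₃} : Typing sp sig valid R Γ A (.sort s₁) →
      Typing sp sig valid R (A :: Γ) B (.sort s₂) → sp.ru s₁ s₂ s₃ →
      Typing sp sig valid R Γ (.pi A B) (.sort s₃)
  | lam {Γ A M B s} : Typing sp sig valid R (A :: Γ) M B →
      Typing sp sig valid R Γ (.pi A B) (.sort s) →
      Typing sp sig valid R Γ (.lam A M) (.pi A B)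
  | app {Γ M N A B} : Typing sp sig valid R Γ M (.pi A B) →
      Typing sp sig valid R Γ N A →
      Typing sp sig valid R Γ (.app M N) (Tm.subst 0 N B)
  | conv {Γ M A B s} : Typing sp sig valid R Γ M A →
      Typing sp sig valid R Γ B (.sort s) → Conv R A B →
      Typing sp sig valid R Γ M B
end

/-- Typing in a pure type system λS (no constants, no rewriting). -/
abbrev PTyping {S : Type} (sp : Spec S) :
    List (Tm S Empty) → Tm S Empty → Tm S Empty → Prop :=
  Typing sp (fun c => c.elim) (fun _ => False) NoRules

abbrev PWf {S : Type} (sp : Spec S) : List (Tm S Empty) → Prop :=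
  Wf sp (fun c => c.elim) (fun _ => False) NoRules

/-- The two sorts of the λΠ-calculus. -/
inductive LSort : Type
  | ty : LSort
  | kd : LSort

/-- The specification of the λΠ-calculus: Type : Kind, rules (Type,Type,Type),(Type,Kind,Kind). -/
def lpiSpec : Spec LSort where
  sorts := Set.univ
  ax s₁ s₂ := s₁ = .ty ∧ s₂ = .kd
  ru s₁ s₂ s₃ := s₁ = .ty ∧ ((s₂ = .ty ∧ s₃ = .ty) ∨ (s₂ = .kd ∧ s₃ = .kd))

/-- A rewrite rule is well-typed in the signature when both sides have a common type
in the plain λΠ-calculus (no rewriting) over that signature. -/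
def RuleWellTyped {C : Type} (sig : C → Tm LSort C) (valid : C → Prop)
    (ρ : Rule LSort C) : Prop :=
  ∃ A, Typing lpiSpec sig valid NoRules ρ.1 ρ.2.1 A ∧
       Typing lpiSpec sig valid NoRules ρ.1 ρ.2.2 A

/-- Well-formed signature: every constant's type is a λΠ type in the empty context. -/
def SigWellFormed {C : Type} (sig : C → Tm LSort C) (valid : C → Prop) : Prop :=
  ∀ c, valid c → ∃ s, Typing lpiSpec sig valid NoRules [] (sig c) (.sort s)

/-- Constants of the Cousineau–Dowek signature Σ_S. -/
inductive Const (S : Type) : Type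
  | u : S → Const S
  | eps : S → Const S
  | dot : S → S → Const S
  | pidot : S → S → S → Const S

/-- Types of the constants of Σ_S. -/
def sigS {S : Type} : Const S → Tm LSort (Const S)
  | .u _ => .sort .ty
  | .eps s => .pi (.const (.u s)) (.sort .ty)
  | .dot _ s₂ => .const (.u s₂)
  | .pidot s₁ s₂ s₃ =>
      .pi (.const (.u s₁))
        (.pi (.pi (.app (.const (.eps s₁)) (.var 0)) (.const (.u s₂))) (.const (.u s₃)))

/-- Valid constants of Σ_S (u_s, ε_s for sorts; ṡ₁ : u_{s₂} for axioms; π̇ for rules). -/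
def validS {S : Type} (sp : Spec S) : Const S → Prop
  | .u s => s ∈ sp.sorts
  | .eps s => s ∈ sp.sorts
  | .dot s₁ s₂ => sp.ax s₁ s₂
  | .pidot s₁ s₂ s₃ => sp.ru s₁ s₂ s₃

/-- The rewrite system R_S: ε_{s₂} ṡ₁ ↝ u_{s₁} and
ε_{s₃}(π̇_{s₁s₂s₃} A B) ↝ Πx:(ε_{s₁}A). ε_{s₂}(B x). -/
inductive RS {S : Type} (sp : Spec S) : Rule LSort (Const S) → Prop
  | axRule {s₁ s₂} : sp.ax s₁ s₂ →
      RS sp ([], .app (.const (.eps s₂)) (.const (.dot s₁ s₂)), .const (.u s₁))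
  | piRule {s₁ s₂ s₃} : sp.ru s₁ s₂ s₃ →
      RS sp ([.pi (.app (.const (.eps s₁)) (.var 0)) (.const (.u s₂)), .const (.u s₁)],
             .app (.const (.eps s₃)) (.app (.app (.const (.pidot s₁ s₂ s₃)) (.var 1)) (.var 0)),
             .pi (.app (.const (.eps s₁)) (.var 1)) (.app (.const (.eps s₂)) (.app (.var 1) (.var 0))))

/-- Typing in λΠ/S. -/
abbrev LTyping {S : Type} (sp : Spec S) :
    List (Tm LSort (Const S)) → Tm LSort (Const S) → Tm LSort (Const S) → Prop :=
  Typing lpiSpec sigS (validS sp) (RS sp)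

abbrev LWf {S : Type} (sp : Spec S) : List (Tm LSort (Const S)) → Prop :=
  Wf lpiSpec sigS (validS sp) (RS sp)

mutual
/-- Forward translation of terms: |M|_Γ = M'. -/
inductive TrT {S : Type} (sp : Spec S) :
    List (Tm S Empty) → Tm S Empty → Tm LSort (Const S) → Prop
  | sort {Γ s s'} : sp.ax s s' → TrT sp Γ (.sort s) (.const (.dot s s'))
  | var {Γ i} : TrT sp Γ (.var i) (.var i)
  | app {Γ M M' N N'} : TrT sp Γ M M' → TrT sp Γ N N' →
      TrT sp Γ (.app M N) (.app M' N')
  | lam {Γ A A' M M'} : TrTy sp Γ A A' → TrT sp (A :: Γ) M M' →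
      TrT sp Γ (.lam A M) (.lam A' M')
  | pi {Γ A B s₁ s₂ s₃ A' A'' B'} : PTyping sp Γ A (.sort s₁) →
      PTyping sp (A :: Γ) B (.sort s₂) → sp.ru s₁ s₂ s₃ →
      TrT sp Γ A A' → TrTy sp Γ A A'' → TrT sp (A :: Γ) B B' →
      TrT sp Γ (.pi A B) (.app (.app (.const (.pidot s₁ s₂ s₃)) A') (.lam A'' B'))

/-- Forward translation of types: ‖A‖_Γ = A'. -/
inductive TrTy {S : Type} (sp : Spec S) :
    List (Tm S Empty) → Tm S Empty → Tm LSort (Const S) → Prop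
  | sort {Γ s} : TrTy sp Γ (.sort s) (.const (.u s))
  | pi {Γ A A' B B'} : TrTy sp Γ A A' → TrTy sp (A :: Γ) B B' →
      TrTy sp Γ (.pi A B) (.pi A' B')
  | el {Γ A s A'} : PTyping sp Γ A (.sort s) → TrT sp Γ A A' →
      TrTy sp Γ A (.app (.const (.eps s)) A')
end

/-- Forward translation of contexts ‖Γ‖. -/
inductive TrCtx {S : Type} (sp : Spec S) :
    List (Tm S Empty) → List (Tm LSort (Const S)) → Prop
  | nil : TrCtx sp [] []
  | cons {Γ Γ' A A'} : TrCtx sp Γ Γ' → TrTy sp Γ A A' → TrCtx sp (A :: Γ) (A' :: Γ')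

mutual
/-- Inverse translation of terms: φ(M) = M'. -/
inductive InvT {S : Type} : Tm LSort (Const S) → Tm S Empty → Prop
  | dot {s₁ s₂} : InvT (.const (.dot s₁ s₂)) (.sort s₁)
  | pidot {s₁ s₂ s₃} : InvT (.const (.pidot s₁ s₂ s₃))
      (.lam (.sort s₁) (.lam (.pi (.var 0) (.sort s₂))
        (.pi (.var 1) (.app (.var 1) (.var 0)))))
  | var {i} : InvT (.var i) (.var i)
  | app {M M' N N'} : InvT M M' → InvT N N' → InvT (.app M N) (.app M' N')
  | lam {A A' M M'} : InvTy A A' → InvT M M' → InvT (.lam A M) (.lam A' M')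

/-- Inverse translation of types: ψ(A) = A'. -/
inductive InvTy {S : Type} : Tm LSort (Const S) → Tm S Empty → Prop
  | u {s} : InvTy (.const (.u s)) (.sort s)
  | el {s M M'} : InvT M M' → InvTy (.app (.const (.eps s)) M) M'
  | pi {A A' B B'} : InvTy A A' → InvTy B B' → InvTy (.pi A B) (.pi A' B')
end

/-- Inverse translation of (object) contexts ψ(Γ). -/
inductive InvCtx {S : Type} : List (Tm LSort (Const S)) → List (Tm S Empty) → Prop
  | nil : InvCtx [] []
  | cons {Γ Γ' A A'} : InvCtx Γ Γ' → InvTy A A' → InvCtx (A :: Γ) (A' :: Γ')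

/-- The minimal completion S* of S: a fresh top-sort τ, axioms s:τ for the top-sorts
of S, and rules (s₁,s₂,τ) for all pairs having no rule. -/
def mc {S : Type} (sp : Spec S) (τ : S) : Spec S where
  sorts := insert τ sp.sorts
  ax s₁ s₂ := sp.ax s₁ s₂ ∨ (s₁ ∈ sp.sorts ∧ (¬ ∃ s, sp.ax s₁ s) ∧ s₂ = τ)
  ru s₁ s₂ s₃ := sp.ru s₁ s₂ s₃ ∨
      (s₁ ∈ insert τ sp.sorts ∧ s₂ ∈ insert τ sp.sorts ∧ (¬ ∃ s, sp.ru s₁ s₂ s) ∧ s₃ = τ)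

/-- S' is a completion of S. -/
def IsCompletion {S : Type} (sp sp' : Spec S) : Prop :=
  sp.sorts ⊆ sp'.sorts ∧
  (∀ s₁ s₂, sp.ax s₁ s₂ → sp'.ax s₁ s₂) ∧
  (∀ s₁ s₂ s₃, sp.ru s₁ s₂ s₃ → sp'.ru s₁ s₂ s₃) ∧
  (∀ s₁ ∈ sp.sorts, ∃ s₂, sp'.ax s₁ s₂) ∧
  (∀ s₁ ∈ sp'.sorts, ∀ s₂ ∈ sp'.sorts, ∃ s₃, sp'.ru s₁ s₂ s₃)

/-- Kind-level β-reduction in a λΠ-calculus modulo: contraction of a β-redex whose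
type has type Kind, under any context. -/
inductive KindStep {C : Type} (sig : C → Tm LSort C) (valid : C → Prop)
    (R : Rule LSort C → Prop) : List (Tm LSort C) → Tm LSort C → Tm LSort C → Prop
  | beta {Γ A M N T} :
      Typing lpiSpec sig valid R Γ (.app (.lam A M) N) T →
      Typing lpiSpec sig valid R Γ T (.sort .kd) →
      KindStep sig valid R Γ (.app (.lam A M) N) (Tm.subst 0 N M)
  | appL {Γ M M' N} : KindStep sig valid R Γ M M' →
      KindStep sig valid R Γ (.app M N) (.app M' N)
  | appR {Γ M N N'} : KindStep sig valid R Γ N N' →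
      KindStep sig valid R Γ (.app M N) (.app M N')
  | lamA {Γ A A' M} : KindStep sig valid R Γ A A' →
      KindStep sig valid R Γ (.lam A M) (.lam A' M)
  | lamM {Γ A M M'} : KindStep sig valid R (A :: Γ) M M' →
      KindStep sig valid R Γ (.lam A M) (.lam A M')
  | piA {Γ A A' B} : KindStep sig valid R Γ A A' →
      KindStep sig valid R Γ (.pi A B) (.pi A' B)
  | piB {Γ A B B'} : KindStep sig valid R (A :: Γ) B B' →
      KindStep sig valid R Γ (.pi A B) (.pi A B')

/-- A term with no Kind-level β-redexes (a λΠ⁻ term). -/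
def KindFree {C : Type} (sig : C → Tm LSort C) (valid : C → Prop)
    (R : Rule LSort C → Prop) (Γ : List (Tm LSort C)) (M : Tm LSort C) : Prop :=
  ∀ N, ¬ KindStep sig valid R Γ M N

/-- Object contexts of λΠ/S: every declared type has type Type. -/
def ObjCtx {S : Type} (sp : Spec S) (Γ : List (Tm LSort (Const S))) : Prop :=
  ∀ i A, Γ[i]? = some A → LTyping sp (Γ.drop (i+1)) A (.sort .ty)

/-- The τ-height measure ℋ_τ on Γ-types of λS*. -/
inductive Ht {S : Type} (sp : Spec S) (τ : S) :
    List (Tm S Empty) → Tm S Empty → Nat → Prop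
  | ntau {Γ A s} : PTyping (mc sp τ) Γ A (.sort s) → s ≠ τ → Ht sp τ Γ A 0
  | srt {Γ s'} : PTyping (mc sp τ) Γ (.sort s') (.sort τ) → Ht sp τ Γ (.sort s') 0
  | pi {Γ B C m n} : PTyping (mc sp τ) Γ (.pi B C) (.sort τ) →
      Ht sp τ Γ B m → Ht sp τ (B :: Γ) C n → Ht sp τ Γ (.pi B C) (max m n + 1)

/-- The reducibility predicate, stratified by the τ-height of the type. -/
def RedN {S : Type} (sp : Spec S) (τ : S) :
    Nat → List (Tm S Empty) → Tm S Empty → Tm S Empty → Prop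
  | n, Γ, M, A =>
    PWf sp Γ ∧ ∃ s, PTyping (mc sp τ) Γ M A ∧ PTyping (mc sp τ) Γ A (.sort s) ∧
      ((s ≠ τ ∨ ∃ s' ∈ sp.sorts, A = .sort s') →
        ∃ M' A', BetaRed M M' ∧ BetaRed A A' ∧ PTyping sp Γ M' A') ∧
      (s = τ → ∀ B C, A = .pi B C → ∀ N,
        (∀ m (hm : m < n), Ht sp τ Γ B m → RedN sp τ m Γ N B) →
        ∀ m (hm : m < n), Ht sp τ Γ (Tm.subst 0 N C) m →
          RedN sp τ m Γ (.app M N) (Tm.subst 0 N C))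
  termination_by n => n

/-- The reducibility predicate Γ ⊨_S M : A. -/
def Reducible {S : Type} (sp : Spec S) (τ : S)
    (Γ : List (Tm S Empty)) (M A : Tm S Empty) : Prop :=
  ∃ n, Ht sp τ Γ A n ∧ RedN sp τ n Γ M A


/-!
Both translations are compositional, so a simultaneous induction on the derivations of
`|M|_Γ` and `‖A‖_Γ` shows that `φ ∘ |·|` and `ψ ∘ ‖·‖` commute with every term former, up to
β-conversion. The only case that is not literally the identity is `Πx:A.B`, translated to
`π̇ |A| (λx:‖A‖.|B|)`: its image `φ(π̇) φ|A| (λx:ψ‖A‖.φ|B|)` β-reduces to `Πx:φ|A|.φ|B|`.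
-/

namespace Tm
variable {S C : Type}

@[simp]
theorem lift_zero (M : Tm S C) (k : Nat) : M.lift 0 k = M := by
  induction M generalizing k <;> simp [lift, *]

@[simp]
theorem subst_lift (M N : Tm S C) (k : Nat) : subst k N (M.lift 1 k) = M := by
  induction M generalizing k with
  | var i =>
    by_cases h : i < k
    · simp [lift, subst, h]
    · simp [lift, subst, h, show ¬ i + 1 < k by omega, show i + 1 ≠ k by omega]
  | _ => simp [lift, subst, *]

@[simp]
theorem subst_var_zero_lift (M : Tm S C) (k : Nat) : subst k (var 0) (M.lift 1 (k + 1)) = M := by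
  induction M generalizing k with
  | var i =>
    rcases lt_trichotomy i k with h | rfl | h
    · simp [lift, subst, h, show i < k + 1 by omega]
    · simp [lift, subst]
    · simp [lift, subst, show ¬ i < k + 1 by omega, show ¬ i + 1 < k by omega,
        show i + 1 ≠ k by omega]
  | _ => simp [lift, subst, *]

end Tm

theorem Relation.EqvGen.lift {α β : Type*} {r : α → α → Prop} {p : β → β → Prop} {a b : α}
    (f : α → β) (h : ∀ a b, r a b → p (f a) (f b)) (hab : EqvGen r a b) :
    EqvGen p (f a) (f b) := by
  induction hab with
  | rel _ _ hr => exact .rel _ _ (h _ _ hr)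
  | refl => exact .refl _
  | symm _ _ _ ih => exact .symm _ _ ih
  | trans _ _ _ _ _ ih₁ ih₂ => exact .trans _ _ _ ih₁ ih₂

section
variable {S C : Type} {R : Rule S C → Prop}

theorem Conv.app {M M' N N' : Tm S C} (hM : Conv R M M') (hN : Conv R N N') :
    Conv R (.app M N) (.app M' N') :=
  .trans _ _ _ (hM.lift (Tm.app · N) fun _ _ => Step.appL)
    (hN.lift (Tm.app M' ·) fun _ _ => Step.appR)

theorem Conv.lam {A A' M M' : Tm S C} (hA : Conv R A A') (hM : Conv R M M') :
    Conv R (.lam A M) (.lam A' M') :=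
  .trans _ _ _ (hA.lift (Tm.lam · M) fun _ _ => Step.lamA)
    (hM.lift (Tm.lam A' ·) fun _ _ => Step.lamM)

theorem Conv.pi {A A' B B' : Tm S C} (hA : Conv R A A') (hB : Conv R B B') :
    Conv R (.pi A B) (.pi A' B') :=
  .trans _ _ _ (hA.lift (Tm.pi · B) fun _ _ => Step.piA)
    (hB.lift (Tm.pi A' ·) fun _ _ => Step.piB)

-- The head is φ(π̇_{s₁s₂s₃}); after the two outer contractions, `(λx:X.B) x` is contracted
-- under the Π.
theorem red_pidotInv_app_lam (s₁ s₂ : S) (A X B : Tm S C) :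
    Red R (.app (.app (.lam (.sort s₁) (.lam (.pi (.var 0) (.sort s₂))
      (.pi (.var 1) (.app (.var 1) (.var 0))))) A) (.lam X B)) (.pi A B) := by
  refine .head (b := .app (.lam (.pi A (.sort s₂)) (.pi (A.lift 1 0) (.app (.var 1) (.var 0))))
      (.lam X B)) ?_
    (.head (b := .pi A (.app (.lam (X.lift 1 0) (B.lift 1 1)) (.var 0))) ?_ (.single ?_))
  · convert Step.appL (Step.beta (R := R)) using 2; simp [Tm.subst]
  · convert Step.beta (R := R) using 1; simp [Tm.subst, Tm.lift]
  · convert Step.piB (Step.beta (R := R)) using 2; simp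

end

mutual
theorem TrT.betaConv_of_invT {S : Type} {sp : Spec S} {Γ : List (Tm S Empty)} {M M'' : Tm S Empty}
    {M' : Tm LSort (Const S)} (h : TrT sp Γ M M') (hinv : InvT M' M'') : BetaConv M'' M := by
  cases h with
  | sort => cases hinv; exact .refl _
  | var => cases hinv; exact .refl _
  | app hM hN =>
    cases hinv with | app hM' hN' =>
    exact (hM.betaConv_of_invT hM').app (hN.betaConv_of_invT hN')
  | lam hA hM =>
    cases hinv with | lam hA' hM' =>
    exact (hA.betaConv_of_invTy hA').lam (hM.betaConv_of_invT hM')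
  | pi _ _ _ hA _ hB =>
    cases hinv with | app hF hB' =>
    cases hF with | app hπ hA' =>
    cases hπ
    cases hB' with | lam _ hB' =>
    exact .trans _ _ _ (Relation.EqvGen.reflTransGen_le_eqvGen _ _ _ (red_pidotInv_app_lam ..))
      ((hA.betaConv_of_invT hA').pi (hB.betaConv_of_invT hB'))

theorem TrTy.betaConv_of_invTy {S : Type} {sp : Spec S} {Γ : List (Tm S Empty)}
    {A A'' : Tm S Empty} {A' : Tm LSort (Const S)} (h : TrTy sp Γ A A') (hinv : InvTy A' A'') :
    BetaConv A'' A := by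
  cases h with
  | sort => cases hinv; exact .refl _
  | pi hA hB =>
    cases hinv with | pi hA' hB' =>
    exact (hA.betaConv_of_invTy hA').pi (hB.betaConv_of_invTy hB')
  | el _ hA =>
    cases hinv with | el hA' =>
    exact hA.betaConv_of_invT hA'
end

/-- the inverse translations are left inverses of the forward
translations up to β-conversion: φ(|M|_Γ) ≡_β M and ψ(‖A‖_Γ) ≡_β A. -/
theorem inverse_translation_left_inverse {S : Type} (sp : Spec S)
    (hfun : sp.Functional) :
    (∀ (Γ : List (Tm S Empty)) (M A : Tm S Empty)
       (M' : Tm LSort (Const S)) (M'' : Tm S Empty),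
       PTyping sp Γ M A → TrT sp Γ M M' → InvT M' M'' → BetaConv M'' M) ∧
    (∀ (Γ : List (Tm S Empty)) (A : Tm S Empty)
       (A' : Tm LSort (Const S)) (A'' : Tm S Empty),
       PWf sp Γ →
       ((∃ s, PTyping sp Γ A (.sort s)) ∨ ∃ s ∈ sp.sorts, A = Tm.sort s) →
       TrTy sp Γ A A' → InvTy A' A'' → BetaConv A'' A) :=
  ⟨fun _ _ _ _ _ _ hM hM' => hM.betaConv_of_invT hM',
   fun _ _ _ _ _ _ hA hA' => hA.betaConv_of_invTy hA'⟩
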